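/- arXiv:2307.12125 — 2 statements merged into one kernel-verified Lean document; each statement's English description precedes it below -/
import Mathlib

section
/- Let b(r) = { x ∈ ℝ^n_{≥0} : x_1 + ... + x_n < r } be the open simplex of size r. If Ω ⊂ ℝ^n_{≥0} is open, bounded, downward closed, and contains the origin in its closure with nonempty interior, then there exists r > 0 and a point (a_1,...,a_n) ∈ ∂Ω with a_1 + ... + a_n = r such that b(r) ⊂ Ω. In other words, the largest simplex included in Ω touches the boundary of Ω at a point whose coordinate sum equals r. -/
open Finset

/-- The open simplex `b(r) = {x ∈ ℝⁿ_{≥0} : Σ xᵢ < r}`. -/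
def openSimplex (n : ℕ) (r : ℝ) : Set (Fin n → ℝ) :=
  {x | (∀ i, 0 ≤ x i) ∧ ∑ i, x i < r}

/-!
The points of the orthant outside `Ω` form a closed set `K`, nonempty because `Ω` is bounded.
The coordinate sum dominates the sup norm on the orthant, so it is coercive on `K` and attains
its minimum `r` at some `a ∈ K`. Every point of the orthant with coordinate sum `< r` then lies
in `Ω`, and `r > 0` because `a ≠ 0 ∈ Ω` (downward closedness). Finally `a ∉ Ω`, while
`t • a ∈ b(r)` for `t < 1`, so `a` lies on the frontier of `Ω`.
-/

open Filter Topology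

section Orthant

variable {ι : Type*} [Fintype ι]

theorem norm_le_sum_of_nonneg {x : ι → ℝ} (hx : 0 ≤ x) : ‖x‖ ≤ ∑ i, x i := by
  refine (pi_norm_le_iff_of_nonneg (sum_nonneg fun i _ => hx i)).2 fun i => ?_
  rw [Real.norm_of_nonneg (hx i)]
  exact single_le_sum (fun j _ => hx j) (mem_univ i)

theorem IsClosed.exists_isMinOn_sum {K : Set (ι → ℝ)} (hK : IsClosed K)
    (hK0 : K ⊆ Set.Ici 0) (hne : K.Nonempty) :
    ∃ a ∈ K, IsMinOn (fun x => ∑ i, x i) K a := by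
  obtain ⟨x₀, hx₀⟩ := hne
  refine (continuous_finsetSum _ fun i _ => continuous_apply i).continuousOn.exists_isMinOn'
    hK hx₀ ?_
  have hnorm : ∀ᶠ x in cocompact (ι → ℝ), ∑ i, x₀ i ≤ ‖x‖ :=
    tendsto_norm_cocompact_atTop.eventually_ge_atTop _
  filter_upwards [inf_le_left (b := 𝓟 K) hnorm, mem_inf_of_right (mem_principal_self K)]
    with x hx hxK
  exact hx.trans (norm_le_sum_of_nonneg (hK0 hxK))

end Orthant

theorem exists_nonneg_notMem_of_isBounded {ι : Type*} [Nonempty ι] {Ω : Set (ι → ℝ)}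
    (hbdd : Bornology.IsBounded Ω) : (Set.Ici 0 \ Ω).Nonempty :=
  Set.nonempty_of_not_subset fun hsub => not_bddAbove_Ici 0 (hbdd.subset hsub).bddAbove

theorem smul_mem_openSimplex {n : ℕ} {a : Fin n → ℝ} (ha : 0 ≤ a) (hpos : 0 < ∑ i, a i)
    {t : ℝ} (ht₀ : 0 ≤ t) (ht₁ : t < 1) : t • a ∈ openSimplex n (∑ i, a i) := by
  refine ⟨fun i => mul_nonneg ht₀ (ha i), ?_⟩
  simp only [Pi.smul_apply, smul_eq_mul, ← mul_sum]
  exact mul_lt_of_lt_one_left hpos ht₁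

theorem mem_closure_openSimplex {n : ℕ} {a : Fin n → ℝ} (ha : 0 ≤ a)
    (hpos : 0 < ∑ i, a i) : a ∈ closure (openSimplex n (∑ i, a i)) := by
  have hlim : Tendsto (fun t : ℝ => t • a) (𝓝[<] 1) (𝓝 a) := by
    simpa only [one_smul, id] using
      (tendsto_id (x := 𝓝 (1 : ℝ))).mono_left nhdsWithin_le_nhds |>.smul_const a
  refine mem_closure_of_tendsto hlim ?_
  filter_upwards [Ioo_mem_nhdsLT zero_lt_one] with t ht
  exact smul_mem_openSimplex ha hpos ht.1.le ht.2

theorem openSimplex_subset_of_isMinOn {n : ℕ} {Ω : Set (Fin n → ℝ)} {a : Fin n → ℝ}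
    (hmin : IsMinOn (fun x => ∑ i, x i) (Set.Ici 0 \ Ω) a) :
    openSimplex n (∑ i, a i) ⊆ Ω := by
  rintro x ⟨hx0, hxa⟩
  by_contra hxΩ
  exact (hmin ⟨hx0, hxΩ⟩).not_gt hxa

/-- For a nonempty bounded downward-closed subset `Ω` of the orthant, open in the
subspace topology, the largest simplex `b(r) ⊆ Ω` touches `∂Ω` at a point of
coordinate sum `r`. -/
theorem largest_simplex_touches_boundary (n : ℕ) (hn : 0 < n)
    (Ω : Set (Fin n → ℝ)) (hne : Ω.Nonempty)
    (hbdd : Bornology.IsBounded Ω)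
    (U : Set (Fin n → ℝ)) (hU : IsOpen U) (hΩU : Ω = U ∩ {x | ∀ i, 0 ≤ x i})
    (hdc : ∀ μ ∈ Ω, ∀ x : Fin n → ℝ, (∀ i, 0 ≤ x i) → (∀ i, x i ≤ μ i) → x ∈ Ω) :
    ∃ r : ℝ, 0 < r ∧ openSimplex n r ⊆ Ω ∧
      ∃ a : Fin n → ℝ, a ∈ frontier Ω ∧ ∑ i, a i = r := by
  have : Nonempty (Fin n) := ⟨⟨0, hn⟩⟩
  have hK : IsClosed (Set.Ici 0 \ Ω) := by
    rw [hΩU, show {x : Fin n → ℝ | ∀ i, 0 ≤ x i} = Set.Ici 0 from rfl,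
      Set.sdiff_inter_self_eq_sdiff, Set.sdiff_eq]
    exact isClosed_Ici.inter hU.isClosed_compl
  obtain ⟨a, ⟨ha0, haΩ⟩, hmin⟩ :=
    hK.exists_isMinOn_sum Set.sdiff_subset (exists_nonneg_notMem_of_isBounded hbdd)
  obtain ⟨μ, hμ⟩ := hne
  have h0Ω : (0 : Fin n → ℝ) ∈ Ω :=
    hdc μ hμ 0 (fun _ => le_rfl) fun i => (hΩU ▸ hμ).2 i
  have hpos : 0 < ∑ i, a i := by
    refine (sum_nonneg fun i _ => ha0 i).lt_of_ne fun hsum => haΩ ?_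
    obtain rfl : a = 0 := funext fun i =>
      (sum_eq_zero_iff_of_nonneg fun j _ => ha0 j).1 hsum.symm i (mem_univ i)
    exact h0Ω
  have hsub := openSimplex_subset_of_isMinOn hmin
  have haclosure : a ∈ closure Ω := closure_mono hsub (mem_closure_openSimplex ha0 hpos)
  exact ⟨_, hpos, hsub, a, ⟨haclosure, fun h => haΩ (interior_subset h)⟩, rfl⟩
end

section
/- Let Ω ⊂ ℝ^n_{≥0} be downward closed (if μ ∈ Ω and 0 ≤ x ≤ μ then x ∈ Ω) with (a_1,...,a_n) ∈ ∂Ω, a_i > 0, and set r = Σ a_i. Assume (i) b(r) ⊂ Ω (the simplex of size r is contained in Ω), (ii) Ω ⊂ l(a_1,...,a_n) (Ω is contained in the L-shaped region), and (iii) for every r' > r there is a symplectic embedding L(a_1,...,a_n) ↪ Z(r'). Then c_G(X_Ω) = c_Z(X_Ω) = r, and hence every normalized symplectic capacity c satisfies c(X_Ω) = r. -/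
open Finset

/-- The moment map. -/
noncomputable def momentMap (n : ℕ) (z : Fin n → ℂ) : Fin n → ℝ :=
  fun i => Real.pi * ‖z i‖ ^ 2

/-- The toric ball `B(r)`. -/
noncomputable def toricBall (n : ℕ) (r : ℝ) : Set (Fin n → ℂ) :=
  momentMap n ⁻¹' {x | ∑ i, x i < r}

/-- The toric cylinder `Z(r)` (using the last coordinate). -/
noncomputable def toricCyl (n : ℕ) (r : ℝ) [NeZero n] : Set (Fin n → ℂ) :=
  momentMap n ⁻¹' {x | x ⟨n - 1, Nat.sub_lt (NeZero.pos n) one_pos⟩ < r}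

/-- The L-shaped toric domain `L(a₁,…,aₙ)`. -/
noncomputable def toricL (n : ℕ) (a : Fin n → ℝ) : Set (Fin n → ℂ) :=
  momentMap n ⁻¹' (⋃ k : Fin n, {x | x k < a k})

/-- Gromov width w.r.t. an abstract symplectic embedding relation. -/
noncomputable def gromovWidth (n : ℕ)
    (emb : Set (Fin n → ℂ) → Set (Fin n → ℂ) → Prop)
    (X : Set (Fin n → ℂ)) : ENNReal :=
  sSup {c | ∃ s : ℝ, 0 < s ∧ emb (toricBall n s) X ∧ c = ENNReal.ofReal s}

/-- Cylindrical capacity w.r.t. an abstract symplectic embedding relation. -/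
noncomputable def cylCap (n : ℕ) [NeZero n]
    (emb : Set (Fin n → ℂ) → Set (Fin n → ℂ) → Prop)
    (X : Set (Fin n → ℂ)) : ENNReal :=
  sInf {c | ∃ s : ℝ, 0 < s ∧ emb X (toricCyl n s) ∧ c = ENNReal.ofReal s}

/-!
`X_Ω` is squeezed between `B(r) ⊆ X_Ω` and `X_Ω ⊆ L(a) ↪ Z(r')` for every `r' > r`, so every
normalized capacity takes the value `r` on it. Given nonsqueezing and `B(s) ⊆ Z(s)`, the Gromov
width and the cylindrical capacity are themselves normalized capacities.
-/

lemma momentMap_nonneg {n : ℕ} (z : Fin n → ℂ) (i : Fin n) : 0 ≤ momentMap n z i :=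
  mul_nonneg Real.pi_pos.le (sq_nonneg _)

lemma toricBall_subset_toricCyl (n : ℕ) [NeZero n] (s : ℝ) : toricBall n s ⊆ toricCyl n s :=
  fun z hz => lt_of_le_of_lt
    (single_le_sum (fun i _ => momentMap_nonneg z i) (mem_univ _)) hz

lemma toricBall_subset_preimage {n : ℕ} {Ω : Set (Fin n → ℝ)} {r : ℝ}
    (h : {x : Fin n → ℝ | (∀ i, 0 ≤ x i) ∧ ∑ i, x i < r} ⊆ Ω) :
    toricBall n r ⊆ momentMap n ⁻¹' Ω :=
  fun z hz => h ⟨momentMap_nonneg z, hz⟩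

lemma ENNReal.le_ofReal_of_forall_lt {x : ENNReal} {r : ℝ}
    (h : ∀ r', r < r' → x ≤ ENNReal.ofReal r') : x ≤ ENNReal.ofReal r :=
  ge_of_tendsto (ENNReal.continuous_ofReal.tendsto r |>.mono_left nhdsWithin_le_nhds)
    (eventually_nhdsWithin_of_forall (s := Set.Ioi r) h)

structure IsNormalizedCapacity (n : ℕ) [NeZero n]
    (emb : Set (Fin n → ℂ) → Set (Fin n → ℂ) → Prop) (c : Set (Fin n → ℂ) → ENNReal) : Prop where
  mono : ∀ X Y, emb X Y → c X ≤ c Y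
  ball : ∀ s : ℝ, 0 < s → c (toricBall n s) = ENNReal.ofReal s
  cyl : ∀ s : ℝ, 0 < s → c (toricCyl n s) = ENNReal.ofReal s

section Capacities

variable {n : ℕ} {emb : Set (Fin n → ℂ) → Set (Fin n → ℂ) → Prop}

theorem IsNormalizedCapacity.eq_of_squeezed [NeZero n] {c : Set (Fin n → ℂ) → ENNReal}
    (hc : IsNormalizedCapacity n emb c) {X : Set (Fin n → ℂ)} {r : ℝ} (hr : 0 < r)
    (hB : emb (toricBall n r) X) (hZ : ∀ r', r < r' → emb X (toricCyl n r')) :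
    c X = ENNReal.ofReal r := by
  apply le_antisymm
  · refine ENNReal.le_ofReal_of_forall_lt fun r' hr' => ?_
    calc c X ≤ c (toricCyl n r') := hc.mono _ _ (hZ r' hr')
      _ = ENNReal.ofReal r' := hc.cyl r' (hr.trans hr')
  · calc ENNReal.ofReal r = c (toricBall n r) := (hc.ball r hr).symm
      _ ≤ c X := hc.mono _ _ hB

lemma le_gromovWidth {X : Set (Fin n → ℂ)} {s : ℝ} (hs : 0 < s) (h : emb (toricBall n s) X) :
    ENNReal.ofReal s ≤ gromovWidth n emb X :=
  le_sSup ⟨s, hs, h, rfl⟩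

lemma gromovWidth_le {X : Set (Fin n → ℂ)} {s : ℝ}
    (h : ∀ s', 0 < s' → emb (toricBall n s') X → s' ≤ s) :
    gromovWidth n emb X ≤ ENNReal.ofReal s :=
  sSup_le fun _ ⟨s', hs', hemb, he⟩ => he ▸ ENNReal.ofReal_le_ofReal (h s' hs' hemb)

lemma cylCap_le [NeZero n] {X : Set (Fin n → ℂ)} {s : ℝ} (hs : 0 < s) (h : emb X (toricCyl n s)) :
    cylCap n emb X ≤ ENNReal.ofReal s :=
  sInf_le ⟨s, hs, h, rfl⟩

lemma le_cylCap [NeZero n] {X : Set (Fin n → ℂ)} {s : ℝ}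
    (h : ∀ s', 0 < s' → emb X (toricCyl n s') → s ≤ s') :
    ENNReal.ofReal s ≤ cylCap n emb X :=
  le_sInf fun _ ⟨s', hs', hemb, he⟩ => he ▸ ENNReal.ofReal_le_ofReal (h s' hs' hemb)

theorem isNormalizedCapacity_gromovWidth [NeZero n]
    (emb_incl : ∀ X Y, X ⊆ Y → emb X Y) (emb_trans : ∀ X Y Z, emb X Y → emb Y Z → emb X Z)
    (nonsqueezing : ∀ s s' : ℝ, 0 < s → 0 < s' → emb (toricBall n s) (toricCyl n s') → s ≤ s') :
    IsNormalizedCapacity n emb (gromovWidth n emb) where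
  mono _ _ hXY := sSup_le_sSup fun _ ⟨s, hs, h, he⟩ => ⟨s, hs, emb_trans _ _ _ h hXY, he⟩
  ball s hs := le_antisymm
    (gromovWidth_le fun s' hs' h => nonsqueezing s' s hs' hs
      (emb_trans _ _ _ h (emb_incl _ _ (toricBall_subset_toricCyl n s))))
    (le_gromovWidth hs (emb_incl _ _ le_rfl))
  cyl s hs := le_antisymm
    (gromovWidth_le fun s' hs' h => nonsqueezing s' s hs' hs h)
    (le_gromovWidth hs (emb_incl _ _ (toricBall_subset_toricCyl n s)))

theorem isNormalizedCapacity_cylCap [NeZero n]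
    (emb_incl : ∀ X Y, X ⊆ Y → emb X Y) (emb_trans : ∀ X Y Z, emb X Y → emb Y Z → emb X Z)
    (nonsqueezing : ∀ s s' : ℝ, 0 < s → 0 < s' → emb (toricBall n s) (toricCyl n s') → s ≤ s') :
    IsNormalizedCapacity n emb (cylCap n emb) where
  mono _ _ hXY := sInf_le_sInf fun _ ⟨s, hs, h, he⟩ => ⟨s, hs, emb_trans _ _ _ hXY h, he⟩
  ball s hs := le_antisymm
    (cylCap_le hs (emb_incl _ _ (toricBall_subset_toricCyl n s)))
    (le_cylCap fun s' hs' h => nonsqueezing s s' hs hs' h)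
  cyl s hs := le_antisymm
    (cylCap_le hs (emb_incl _ _ le_rfl))
    (le_cylCap fun s' hs' h => nonsqueezing s s' hs hs'
      (emb_trans _ _ _ (emb_incl _ _ (toricBall_subset_toricCyl n s)) h))

end Capacities

theorem capacities_agree_on_monotone_toric_general (n : ℕ) [NeZero n]
    (Ω : Set (Fin n → ℝ)) (a : Fin n → ℝ) (ha : ∀ i, 0 < a i)
    (hball : {x : Fin n → ℝ | (∀ i, 0 ≤ x i) ∧ ∑ i, x i < ∑ i, a i} ⊆ Ω)
    (hL : Ω ⊆ ⋃ k : Fin n, {x : Fin n → ℝ | x k < a k})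
    (emb : Set (Fin n → ℂ) → Set (Fin n → ℂ) → Prop)
    (emb_incl : ∀ X Y, X ⊆ Y → emb X Y)
    (emb_trans : ∀ X Y Z, emb X Y → emb Y Z → emb X Z)
    (nonsqueezing : ∀ s s' : ℝ, 0 < s → 0 < s' →
      emb (toricBall n s) (toricCyl n s') → s ≤ s')
    (hemb : ∀ r' : ℝ, ∑ i, a i < r' → emb (toricL n a) (toricCyl n r')) :
    gromovWidth n emb (momentMap n ⁻¹' Ω) = ENNReal.ofReal (∑ i, a i) ∧
    cylCap n emb (momentMap n ⁻¹' Ω) = ENNReal.ofReal (∑ i, a i) ∧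
    ∀ c : Set (Fin n → ℂ) → ENNReal,
      (∀ X Y, emb X Y → c X ≤ c Y) →
      (∀ s : ℝ, 0 < s → c (toricBall n s) = ENNReal.ofReal s) →
      (∀ s : ℝ, 0 < s → c (toricCyl n s) = ENNReal.ofReal s) →
      c (momentMap n ⁻¹' Ω) = ENNReal.ofReal (∑ i, a i) := by
  have hr : 0 < ∑ i, a i := sum_pos (fun i _ => ha i) univ_nonempty
  have hB : emb (toricBall n (∑ i, a i)) (momentMap n ⁻¹' Ω) :=
    emb_incl _ _ (toricBall_subset_preimage hball)
  have hZ : ∀ r', ∑ i, a i < r' → emb (momentMap n ⁻¹' Ω) (toricCyl n r') :=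
    fun r' hr' => emb_trans _ _ _ (emb_incl _ _ (Set.preimage_mono hL)) (hemb r' hr')
  refine ⟨?_, ?_, fun c hmono hcB hcZ => ?_⟩
  · exact (isNormalizedCapacity_gromovWidth emb_incl emb_trans nonsqueezing).eq_of_squeezed hr hB hZ
  · exact (isNormalizedCapacity_cylCap emb_incl emb_trans nonsqueezing).eq_of_squeezed hr hB hZ
  · exact (IsNormalizedCapacity.mk hmono hcB hcZ).eq_of_squeezed hr hB hZ

/-- Deduction of Theorem 1 from Theorem 2: for a downward-closed `Ω` with
boundary point `a` (all `aᵢ > 0`, `r = Σ aᵢ`) such that `b(r) ⊆ Ω ⊆ l(a)` and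
`L(a) ↪ Z(r')` for every `r' > r`, the Gromov width and cylindrical capacity of
`X_Ω` both equal `r`, so every normalized capacity of `X_Ω` equals `r`.
(Gromov's nonsqueezing `B(s) ↪ Z(s') ⟹ s ≤ s'` is taken as a hypothesis.) -/
theorem capacities_agree_on_monotone_toric (n : ℕ) [NeZero n]
    (Ω : Set (Fin n → ℝ)) (a : Fin n → ℝ) (ha : ∀ i, 0 < a i)
    (hdc : ∀ μ ∈ Ω, ∀ x : Fin n → ℝ, (∀ i, 0 ≤ x i) → (∀ i, x i ≤ μ i) → x ∈ Ω)
    (haΩ : a ∈ frontier Ω)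
    (hball : {x : Fin n → ℝ | (∀ i, 0 ≤ x i) ∧ ∑ i, x i < ∑ i, a i} ⊆ Ω)
    (hL : Ω ⊆ ⋃ k : Fin n, {x : Fin n → ℝ | x k < a k})
    (emb : Set (Fin n → ℂ) → Set (Fin n → ℂ) → Prop)
    (emb_incl : ∀ X Y, X ⊆ Y → emb X Y)
    (emb_trans : ∀ X Y Z, emb X Y → emb Y Z → emb X Z)
    (nonsqueezing : ∀ s s' : ℝ, 0 < s → 0 < s' →
      emb (toricBall n s) (toricCyl n s') → s ≤ s')
    (hemb : ∀ r' : ℝ, ∑ i, a i < r' → emb (toricL n a) (toricCyl n r')) :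
    gromovWidth n emb (momentMap n ⁻¹' Ω) = ENNReal.ofReal (∑ i, a i) ∧
    cylCap n emb (momentMap n ⁻¹' Ω) = ENNReal.ofReal (∑ i, a i) ∧
    ∀ c : Set (Fin n → ℂ) → ENNReal,
      (∀ X Y, emb X Y → c X ≤ c Y) →
      (∀ s : ℝ, 0 < s → c (toricBall n s) = ENNReal.ofReal s) →
      (∀ s : ℝ, 0 < s → c (toricCyl n s) = ENNReal.ofReal s) →
      c (momentMap n ⁻¹' Ω) = ENNReal.ofReal (∑ i, a i) :=
  capacities_agree_on_monotone_toric_general n Ω a ha hball hL emb emb_incl emb_trans nonsqueezing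
    hemb
end
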